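/- Let G(s) = L + (s/(1−s))·W on the complete graph with V vertices, where W is diagonal, W_m = 0 its unique smallest eigenvalue, and ‖W‖ ≤ V. Let g(s) := g_{{m}}(s) = V − λ₀(G(s)) − 1 where λ₀(G(s)) is the ground eigenvalue of G(s). If 0 ≤ δs ≤ (c₀/(4V))·g(s)·(1−s) for some c₀ ∈ (0,1), then |g(s + δs) − g(s)| ≤ c₀·g(s). -/

import Mathlib

open Matrix

/-- The smallest eigenvalue of a Hermitian matrix. -/
noncomputable def lamMin {n : ℕ} {A : Matrix (Fin n) (Fin n) ℝ}
    (hA : A.IsHermitian) : ℝ :=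
  ⨅ i, hA.eigenvalues i

/-- The combinatorial Laplacian of the complete graph on `V` vertices:
`L = V·I − J`, where `J` is the all-ones matrix. -/
def cgL (V : ℕ) : Matrix (Fin V) (Fin V) ℝ :=
  (V : ℝ) • (1 : Matrix (Fin V) (Fin V) ℝ) - Matrix.of (fun _ _ => (1 : ℝ))

/-- The rescaled interpolating Hamiltonian `G(s) = L + (s/(1−s))·W`. -/
noncomputable def cgG (V : ℕ) (W : Fin V → ℝ) (s : ℝ) : Matrix (Fin V) (Fin V) ℝ :=
  cgL V + (s / (1 - s)) • Matrix.diagonal W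

/-!
Multiplying by `1 - s` turns `G(s)` into `H(s) = (1 - s) L + s W`, which is affine in `s` with
slope `W - L`; since `0 ≤ L, W ≤ V`, the quadratic form of `W - L` is bounded by `V` on unit
vectors, so by Weyl's inequality `s ↦ (1 - s) λ₀(G(s))` is `V`-Lipschitz. Undoing the rescaling
costs `δs · λ₀(G(s)) ≤ V δs`, because `0 ≤ λ₀(G(s)) ≤ G(s)ₘₘ = V - 1`. Hence
`|g(s + δs) - g(s)| (1 - s - δs) ≤ 2 V δs`, and the bound on `δs` makes the right-hand side at
most `c₀ g(s) (1 - s - δs)`.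
-/

section SmallestEigenvalue

variable {n : ℕ} {A B : Matrix (Fin n) (Fin n) ℝ}

lemma dotProduct_diagonal_mulVec_le_of_le {d e : Fin n → ℝ} (hde : d ≤ e) (x : Fin n → ℝ) :
    x ⬝ᵥ (diagonal d *ᵥ x) ≤ x ⬝ᵥ (diagonal e *ᵥ x) := by
  simp only [dotProduct, mulVec_diagonal]
  exact Finset.sum_le_sum fun i _ ↦ by nlinarith [mul_self_nonneg (x i), hde i]

lemma dotProduct_diagonal_const_mulVec (c : ℝ) (x : Fin n → ℝ) :
    x ⬝ᵥ (diagonal (fun _ ↦ c) *ᵥ x) = c * (x ⬝ᵥ x) := by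
  simp only [dotProduct, mulVec_diagonal, Finset.mul_sum]
  exact Finset.sum_congr rfl fun i _ ↦ by ring

lemma dotProduct_diagonal_mulVec_nonneg {d : Fin n → ℝ} (hd : 0 ≤ d) (x : Fin n → ℝ) :
    0 ≤ x ⬝ᵥ (diagonal d *ᵥ x) := by
  simpa using dotProduct_diagonal_mulVec_le_of_le hd x

lemma lamMin_le_eigenvalues (hA : A.IsHermitian) (i : Fin n) : lamMin hA ≤ hA.eigenvalues i :=
  Finite.ciInf_le _ i

lemma lamMin_mul_dotProduct_self_le (hA : A.IsHermitian) (x : Fin n → ℝ) :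
    lamMin hA * (x ⬝ᵥ x) ≤ x ⬝ᵥ (A *ᵥ x) := by
  set U : Matrix (Fin n) (Fin n) ℝ := ↑hA.eigenvectorUnitary
  have hU : U * star U = 1 := Matrix.mem_unitaryGroup_iff.mp hA.eigenvectorUnitary.2
  set y := star U *ᵥ x
  have conj : ∀ M : Matrix (Fin n) (Fin n) ℝ, x ⬝ᵥ ((U * M * star U) *ᵥ x) = y ⬝ᵥ (M *ᵥ y) := by
    intro M
    rw [← mulVec_mulVec, ← mulVec_mulVec, dotProduct_mulVec, ← mulVec_transpose]
    rfl
  have hxx : x ⬝ᵥ x = y ⬝ᵥ y := by simpa [hU] using conj 1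
  have hAx : x ⬝ᵥ (A *ᵥ x) = y ⬝ᵥ (diagonal hA.eigenvalues *ᵥ y) := by
    conv_lhs => rw [hA.spectral_theorem, Unitary.conjStarAlgAut_apply]
    exact conj _
  rw [hxx, hAx, ← dotProduct_diagonal_const_mulVec]
  exact dotProduct_diagonal_mulVec_le_of_le (lamMin_le_eigenvalues hA) y

lemma lamMin_le_dotProduct_mulVec (hA : A.IsHermitian) {x : Fin n → ℝ} (hx : x ⬝ᵥ x = 1) :
    lamMin hA ≤ x ⬝ᵥ (A *ᵥ x) := by
  simpa [hx] using lamMin_mul_dotProduct_self_le hA x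

lemma lamMin_le_apply_self (hA : A.IsHermitian) (i : Fin n) : lamMin hA ≤ A i i := by
  simpa [mulVec_single_one] using lamMin_le_dotProduct_mulVec hA (x := Pi.single i 1) (by simp)

variable [NeZero n]

lemma exists_dotProduct_mulVec_eq_lamMin (hA : A.IsHermitian) :
    ∃ v : Fin n → ℝ, v ⬝ᵥ v = 1 ∧ v ⬝ᵥ (A *ᵥ v) = lamMin hA := by
  obtain ⟨i, hi⟩ := exists_eq_ciInf_of_finite (f := hA.eigenvalues)
  refine ⟨hA.eigenvectorBasis i, ?_, ?_⟩
  · have h := real_inner_self_eq_norm_sq (hA.eigenvectorBasis i)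
    rw [hA.eigenvectorBasis.orthonormal.1 i, EuclideanSpace.inner_eq_star_dotProduct] at h
    simpa using h
  · rw [lamMin, ← hi, hA.eigenvalues_eq i]
    simp

lemma lamMin_nonneg (hA : A.IsHermitian) (h : ∀ x, 0 ≤ x ⬝ᵥ (A *ᵥ x)) : 0 ≤ lamMin hA := by
  obtain ⟨v, -, hAv⟩ := exists_dotProduct_mulVec_eq_lamMin hA
  exact hAv ▸ h v

lemma lamMin_smul (hA : A.IsHermitian) {a : ℝ} (ha : 0 < a) :
    lamMin (hA.smul (IsSelfAdjoint.all a)) = a * lamMin hA := by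
  obtain ⟨v, hv, hAv⟩ := exists_dotProduct_mulVec_eq_lamMin hA
  obtain ⟨w, hw, haAw⟩ := exists_dotProduct_mulVec_eq_lamMin (hA.smul (IsSelfAdjoint.all a))
  rw [smul_mulVec, dotProduct_smul, smul_eq_mul] at haAw
  apply le_antisymm
  · simpa [smul_mulVec, hAv] using lamMin_le_dotProduct_mulVec (hA.smul (IsSelfAdjoint.all a)) hv
  · rw [← haAw]
    exact mul_le_mul_of_nonneg_left (lamMin_le_dotProduct_mulVec hA hw) ha.le

lemma lamMin_le_lamMin_add (hA : A.IsHermitian) (hB : B.IsHermitian) {r : ℝ}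
    (h : ∀ x, x ⬝ᵥ x = 1 → x ⬝ᵥ (A *ᵥ x) ≤ x ⬝ᵥ (B *ᵥ x) + r) : lamMin hA ≤ lamMin hB + r := by
  obtain ⟨v, hv, hBv⟩ := exists_dotProduct_mulVec_eq_lamMin hB
  exact hBv ▸ (lamMin_le_dotProduct_mulVec hA hv).trans (h v hv)

lemma abs_lamMin_sub_lamMin_le (hA : A.IsHermitian) (hB : B.IsHermitian) {r : ℝ}
    (h : ∀ x, x ⬝ᵥ x = 1 → |x ⬝ᵥ ((B - A) *ᵥ x)| ≤ r) : |lamMin hB - lamMin hA| ≤ r := by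
  simp only [sub_mulVec, dotProduct_sub, abs_sub_le_iff] at h ⊢
  constructor
  · linarith [lamMin_le_lamMin_add hB hA fun x hx ↦ by linarith [h x hx]]
  · linarith [lamMin_le_lamMin_add hA hB fun x hx ↦ by linarith [h x hx]]

end SmallestEigenvalue

section CompleteGraph

variable {V : ℕ} {W : Fin V → ℝ}

lemma dotProduct_cgL_mulVec (x : Fin V → ℝ) :
    x ⬝ᵥ (cgL V *ᵥ x) = V * (x ⬝ᵥ x) - (∑ i, x i) ^ 2 := by
  simp only [cgL, sub_mulVec, dotProduct_sub, smul_mulVec, one_mulVec, dotProduct_smul,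
    smul_eq_mul, sq, Finset.sum_mul]
  simp [dotProduct, mulVec]

lemma dotProduct_cgL_mulVec_nonneg (x : Fin V → ℝ) : 0 ≤ x ⬝ᵥ (cgL V *ᵥ x) := by
  have := sq_sum_le_card_mul_sum_sq (s := Finset.univ) (f := x)
  simp only [Finset.card_univ, Fintype.card_fin] at this
  rw [dotProduct_cgL_mulVec]
  simpa [dotProduct, sq] using this

lemma dotProduct_cgL_mulVec_le (x : Fin V → ℝ) : x ⬝ᵥ (cgL V *ᵥ x) ≤ V * (x ⬝ᵥ x) := by
  rw [dotProduct_cgL_mulVec]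
  linarith [sq_nonneg (∑ i, x i)]

lemma cgL_apply_self (i : Fin V) : cgL V i i = V - 1 := by
  simp [cgL]

lemma abs_dotProduct_diagonal_sub_cgL_mulVec_le (hW0 : ∀ u, 0 ≤ W u) (hWV : ∀ u, W u ≤ V)
    (x : Fin V → ℝ) : |x ⬝ᵥ ((diagonal W - cgL V) *ᵥ x)| ≤ V * (x ⬝ᵥ x) := by
  have hWx := dotProduct_diagonal_mulVec_le_of_le (e := fun _ ↦ (V : ℝ)) hWV x
  rw [dotProduct_diagonal_const_mulVec] at hWx
  rw [sub_mulVec, dotProduct_sub, abs_le]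
  constructor <;> linarith [dotProduct_diagonal_mulVec_nonneg hW0 x,
    dotProduct_cgL_mulVec_nonneg x, dotProduct_cgL_mulVec_le x]

lemma smul_cgG_sub_smul_cgG {s t : ℝ} (hs : s < 1) (ht : t < 1) :
    (1 - t) • cgG V W t - (1 - s) • cgG V W s = (t - s) • (diagonal W - cgL V) := by
  have hs' : (1 - s) * (s / (1 - s)) = s := by field_simp [(sub_pos.2 hs).ne']
  have ht' : (1 - t) * (t / (1 - t)) = t := by field_simp [(sub_pos.2 ht).ne']
  simp only [cgG, smul_add, smul_smul, hs', ht']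
  module

lemma lamMin_cgG_nonneg [NeZero V] (hW0 : ∀ u, 0 ≤ W u) {t : ℝ} (ht0 : 0 ≤ t) (ht1 : t < 1)
    (hG : (cgG V W t).IsHermitian) : 0 ≤ lamMin hG := by
  refine lamMin_nonneg hG fun x ↦ ?_
  rw [cgG, add_mulVec, dotProduct_add, smul_mulVec, dotProduct_smul, smul_eq_mul]
  exact add_nonneg (dotProduct_cgL_mulVec_nonneg x) <|
    mul_nonneg (div_nonneg ht0 (by linarith)) (dotProduct_diagonal_mulVec_nonneg hW0 x)

lemma lamMin_cgG_le {m : Fin V} (hWm : W m = 0) {t : ℝ} (hG : (cgG V W t).IsHermitian) :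
    lamMin hG ≤ V - 1 := by
  simpa [cgG, cgL_apply_self, hWm] using lamMin_le_apply_self hG m

lemma abs_lamMin_cgG_sub_le [NeZero V] (hW0 : ∀ u, 0 ≤ W u) (hWV : ∀ u, W u ≤ V) {s t : ℝ}
    (hst : s ≤ t) (ht : t < 1) (hGs : (cgG V W s).IsHermitian) (hGt : (cgG V W t).IsHermitian) :
    |(1 - t) * lamMin hGt - (1 - s) * lamMin hGs| ≤ V * (t - s) := by
  rw [← lamMin_smul hGt (by linarith), ← lamMin_smul hGs (by linarith)]
  refine abs_lamMin_sub_lamMin_le _ _ fun x hx ↦ ?_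
  rw [smul_cgG_sub_smul_cgG (by linarith) ht, smul_mulVec, dotProduct_smul, smul_eq_mul,
    abs_mul, abs_of_nonneg (sub_nonneg.2 hst), mul_comm (V : ℝ)]
  simpa [hx] using
    mul_le_mul_of_nonneg_left (abs_dotProduct_diagonal_sub_cgL_mulVec_le hW0 hWV x)
      (sub_nonneg.2 hst)

end CompleteGraph

lemma abs_sub_mul_le_of_abs_rescaled_sub_le {a b s δ V : ℝ} (hb0 : 0 ≤ b) (hbV : b ≤ V)
    (hδ : 0 ≤ δ) (h : |(1 - (s + δ)) * a - (1 - s) * b| ≤ V * δ) :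
    |(a - b) * (1 - (s + δ))| ≤ 2 * V * δ :=
  calc |(a - b) * (1 - (s + δ))| = |((1 - (s + δ)) * a - (1 - s) * b) + δ * b| := by ring_nf
    _ ≤ V * δ + δ * b := (abs_add_le _ _).trans <| add_le_add h (abs_of_nonneg (by positivity)).le
    _ ≤ 2 * V * δ := by nlinarith

theorem g_perturbation {V : ℕ} (W : Fin V → ℝ) (m : Fin V)
    (hWm : W m = 0) (hmin : ∀ u : Fin V, u ≠ m → 0 < W u)
    (hWnorm : ∀ u : Fin V, W u ≤ V)
    (hG : ∀ t : ℝ, (cgG V W t).IsHermitian)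
    (s δs c₀ : ℝ) (hc₀ : 0 < c₀) (hc₀' : c₀ < 1)
    (hs0 : 0 ≤ s) (hs1 : s < 1)
    (hδs : 0 ≤ δs)
    (hδs' : δs ≤ c₀ / (4 * V) * (((V : ℝ) - lamMin (hG s) - 1) * (1 - s))) :
    |((V : ℝ) - lamMin (hG (s + δs)) - 1) - ((V : ℝ) - lamMin (hG s) - 1)|
      ≤ c₀ * ((V : ℝ) - lamMin (hG s) - 1) := by
  have : NeZero V := NeZero.of_pos m.pos
  have hV : (0 : ℝ) < V := by exact_mod_cast m.pos
  have hW0 : ∀ u, 0 ≤ W u := fun u ↦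
    (eq_or_ne u m).elim (fun hu ↦ hu ▸ hWm.ge) fun hu ↦ (hmin u hu).le
  set g := (V : ℝ) - lamMin (hG s) - 1
  have hlam0 := lamMin_cgG_nonneg hW0 hs0 hs1 (hG s)
  have hg0 : 0 ≤ g := by linarith [lamMin_cgG_le hWm (hG s)]
  have hδ : 4 * V * δs ≤ c₀ * g * (1 - s) := by
    rw [div_mul_eq_mul_div, le_div_iff₀ (by positivity)] at hδs'
    linarith
  have hcg : c₀ * g ≤ V := by nlinarith
  have hδ_small : 4 * δs ≤ 1 - s := by
    nlinarith [mul_le_mul_of_nonneg_right hcg (sub_nonneg.2 hs1.le)]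
  have hweyl := abs_lamMin_cgG_sub_le hW0 hWnorm (le_add_of_nonneg_right hδs) (by linarith)
    (hG s) (hG (s + δs))
  rw [add_sub_cancel_left] at hweyl
  have key := abs_sub_mul_le_of_abs_rescaled_sub_le hlam0 (by linarith) hδs hweyl
  rw [abs_mul, abs_of_pos (a := 1 - (s + δs)) (by linarith)] at key
  rw [show ∀ a b : ℝ, (V - a - 1) - (V - b - 1) = -(a - b) by intros; ring, abs_neg]
  refine le_of_mul_le_mul_right ?_ (show 0 < 1 - (s + δs) by linarith)
  nlinarith [mul_le_mul_of_nonneg_left (show 1 - s ≤ 2 * (1 - (s + δs)) by linarith)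
    (mul_nonneg hc₀.le hg0)]
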